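/- arXiv:2602.15136 — 2 statements merged into one kernel-verified Lean document; each statement's English description precedes it below -/
import Mathlib

section
/- For every A > 0 there is a constant C = C(A) > 0 such that for all priors G₀, G ∈ P([0,A]) and every ε ∈ (0, e^{−e}): E_{X ∼ f_{G₀}}[(θ_G(X) − θ_{G₀}(X))²] ≤ C · ((log(1/ε) / log log(1/ε)) · H²(f_G, f_{G₀}) + ε). -/
open MeasureTheory Real
open scoped ENNReal BigOperators

set_option maxHeartbeats 1000000

noncomputable section

/-- The Poisson pmf with mean `θ`: `Poi(x; θ) = e^{-θ} θ^x / x!`. -/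
def poiPMF (θ : ℝ) (x : ℕ) : ℝ := Real.exp (-θ) * θ ^ x / (Nat.factorial x : ℝ)

/-- `P([0,A])`: Borel probability measures on `[0, A]`. -/
abbrev Prior (A : ℝ) := ProbabilityMeasure (Set.Icc (0 : ℝ) A)

/-- The Poisson mixture pmf `f_G(x) = ∫ e^{-θ} θ^x / x! dG(θ)`. -/
def mix {A : ℝ} (G : Prior A) (x : ℕ) : ℝ :=
  ∫ θ : Set.Icc (0 : ℝ) A, poiPMF (θ : ℝ) x ∂(G : Measure (Set.Icc (0 : ℝ) A))

lemma poi_cont {A : ℝ} (x : ℕ) : Continuous fun θ : Set.Icc (0:ℝ) A => poiPMF (θ:ℝ) x := by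
  unfold poiPMF
  exact ((Real.continuous_exp.comp continuous_subtype_val.neg).mul
    (continuous_subtype_val.pow x)).div_const _

lemma poi_integrable {A : ℝ} (G : Prior A) (x : ℕ) :
    Integrable (fun θ : Set.Icc (0:ℝ) A => poiPMF (θ:ℝ) x)
      (G : Measure (Set.Icc (0:ℝ) A)) := by
  refine (poi_cont x).integrable_of_hasCompactSupport ?_
  exact IsCompact.of_isClosed_subset isCompact_univ (isClosed_tsupport _) (Set.subset_univ _)

lemma poi_nonneg {A : ℝ} (θ : Set.Icc (0:ℝ) A) (x : ℕ) : 0 ≤ poiPMF (θ:ℝ) x := by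
  unfold poiPMF
  have := θ.2.1
  positivity

lemma mix_nonneg {A : ℝ} (G : Prior A) (x : ℕ) : 0 ≤ mix G x :=
  integral_nonneg fun θ => poi_nonneg θ x

lemma mix_le {A : ℝ} (hA : 0 < A) (G : Prior A) (x : ℕ) :
    mix G x ≤ A ^ x / (Nat.factorial x : ℝ) := by
  have h : ∀ θ : Set.Icc (0:ℝ) A, poiPMF (θ:ℝ) x ≤ A ^ x / (Nat.factorial x : ℝ) := by
    intro θ
    unfold poiPMF
    have h1 : Real.exp (-(θ:ℝ)) ≤ 1 := Real.exp_le_one_iff.mpr (neg_nonpos.mpr θ.2.1)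
    have h2 : (θ:ℝ) ^ x ≤ A ^ x := pow_le_pow_left₀ θ.2.1 θ.2.2 x
    have h3 : (0:ℝ) < Nat.factorial x := by positivity
    have h4 : (0:ℝ) ≤ (θ:ℝ)^x := pow_nonneg θ.2.1 x
    gcongr
    nlinarith [Real.exp_pos (-(θ:ℝ))]
  calc mix G x ≤ ∫ _θ : Set.Icc (0:ℝ) A, (A ^ x / (Nat.factorial x : ℝ))
        ∂(G : Measure (Set.Icc (0:ℝ) A)) :=
      integral_mono (poi_integrable G x) (integrable_const _) h
    _ = A ^ x / (Nat.factorial x : ℝ) := by simp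


/-- The Bayes estimator `θ_G(x) = (x+1) f_G(x+1) / f_G(x)` (equal to `0` when `f_G(x) = 0`,
by the junk value of division). -/
def bayes {A : ℝ} (G : Prior A) (x : ℕ) : ℝ := ((x : ℝ) + 1) * mix G (x + 1) / mix G x

lemma succ_le {A : ℝ} (hA : 0 < A) (G : Prior A) (x : ℕ) :
    ((x : ℝ) + 1) * mix G (x + 1) ≤ A * mix G x := by
  have key : ∀ θ : Set.Icc (0:ℝ) A,
      ((x : ℝ) + 1) * poiPMF (θ:ℝ) (x+1) ≤ A * poiPMF (θ:ℝ) x := by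
    intro θ
    have h1 : ((x : ℝ) + 1) * poiPMF (θ:ℝ) (x+1) = (θ:ℝ) * poiPMF (θ:ℝ) x := by
      unfold poiPMF
      rw [Nat.factorial_succ]
      have hx : (Nat.factorial x : ℝ) ≠ 0 := by positivity
      have hx1 : ((x:ℝ) + 1) ≠ 0 := by positivity
      push_cast
      field_simp
      ring
    rw [h1]
    have := poi_nonneg θ x
    nlinarith [θ.2.2]
  have h2 : ((x : ℝ) + 1) * mix G (x + 1) =
      ∫ θ : Set.Icc (0:ℝ) A, ((x:ℝ)+1) * poiPMF (θ:ℝ) (x+1)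
        ∂(G : Measure (Set.Icc (0:ℝ) A)) := by
    rw [integral_const_mul]; rfl
  have h3 : A * mix G x =
      ∫ θ : Set.Icc (0:ℝ) A, A * poiPMF (θ:ℝ) x ∂(G : Measure (Set.Icc (0:ℝ) A)) := by
    rw [integral_const_mul]; rfl
  rw [h2, h3]
  exact integral_mono ((poi_integrable G (x+1)).const_mul _) ((poi_integrable G x).const_mul _) key

lemma bayes_nonneg {A : ℝ} (G : Prior A) (x : ℕ) : 0 ≤ bayes G x := by
  unfold bayes
  have := mix_nonneg G x
  have := mix_nonneg G (x+1)
  positivity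

lemma bayes_le {A : ℝ} (hA : 0 < A) (G : Prior A) (x : ℕ) : bayes G x ≤ A := by
  unfold bayes
  rcases eq_or_lt_of_le (mix_nonneg G x) with h | h
  · rw [← h, div_zero]; exact hA.le
  · rw [div_le_iff₀ h]
    exact succ_le hA G x

lemma key_alg {A a b a0 b0 : ℝ} (hA : 0 < A) (ha : 0 ≤ a) (hb : 0 ≤ b)
    (ha0 : 0 ≤ a0) (hb0 : 0 ≤ b0) (hab : a ≤ A * b) (hab0 : a0 ≤ A * b0) :
    b0 * (a / b - a0 / b0) ^ 2 ≤
      80 * A * (1 + A) * ((Real.sqrt a - Real.sqrt a0) ^ 2 + (Real.sqrt b - Real.sqrt b0) ^ 2) := by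
  have hs0 : (0:ℝ) ≤ (Real.sqrt a - Real.sqrt a0) ^ 2 := sq_nonneg _
  have ht0 : (0:ℝ) ≤ (Real.sqrt b - Real.sqrt b0) ^ 2 := sq_nonneg _
  have hsa : Real.sqrt a ^ 2 = a := Real.sq_sqrt ha
  have hsb : Real.sqrt b ^ 2 = b := Real.sq_sqrt hb
  have hsa0 : Real.sqrt a0 ^ 2 = a0 := Real.sq_sqrt ha0
  have hsb0 : Real.sqrt b0 ^ 2 = b0 := Real.sq_sqrt hb0
  have hna : 0 ≤ Real.sqrt a := Real.sqrt_nonneg a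
  have hnb : 0 ≤ Real.sqrt b := Real.sqrt_nonneg b
  have hna0 : 0 ≤ Real.sqrt a0 := Real.sqrt_nonneg a0
  have hnb0 : 0 ≤ Real.sqrt b0 := Real.sqrt_nonneg b0
  set s : ℝ := (Real.sqrt a - Real.sqrt a0) ^ 2 with hs_def
  set t : ℝ := (Real.sqrt b - Real.sqrt b0) ^ 2 with ht_def
  rcases eq_or_lt_of_le hb0 with h0 | h0
  · rw [← h0]
    simp only [zero_mul]
    positivity
  rcases eq_or_lt_of_le hb with h | h
  · -- b = 0, hence a = 0, a/b = 0
    have haz : a = 0 := le_antisymm (by nlinarith) ha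
    have htb : t = b0 := by rw [ht_def, ← h, Real.sqrt_zero]; nlinarith
    rw [haz, ← h, zero_div, zero_sub, neg_sq, div_pow]
    have hg : b0 * (a0 ^ 2 / b0 ^ 2) = a0 ^ 2 / b0 := by
      field_simp
    rw [hg, div_le_iff₀ h0]
    have ha0sq : a0 ^ 2 ≤ A ^ 2 * b0 ^ 2 := by nlinarith
    rw [htb]
    nlinarith [mul_nonneg (mul_nonneg (by positivity : (0:ℝ) ≤ 80*A*(1+A)) hs0) hb0,
      mul_nonneg (mul_nonneg hA.le hA.le) (mul_nonneg hb0 hb0)]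
  · -- main case: b > 0, b0 > 0
    have hbb0 : (0:ℝ) ≤ b^2 * b0 := by positivity
    have key : (a * b0 - a0 * b)^2 ≤ 80 * A * (1 + A) * (s + t) * (b^2 * b0) := by
      rcases le_or_gt b0 (4 * b) with hcase | hcase
      · -- b0 ≤ 4b
        have e1 : (a - a0)^2 ≤ 10 * A * s * b := by
          have hfac : a - a0 = (Real.sqrt a - Real.sqrt a0) * (Real.sqrt a + Real.sqrt a0) := by
            linear_combination hsa0 - hsa
          have hsum : (Real.sqrt a + Real.sqrt a0)^2 ≤ 2*a + 2*a0 := by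
            nlinarith [sq_nonneg (Real.sqrt a - Real.sqrt a0)]
          have h5 : 2*a + 2*a0 ≤ 10*A*b := by nlinarith
          calc (a - a0)^2 = s * (Real.sqrt a + Real.sqrt a0)^2 := by rw [hfac]; ring
            _ ≤ s * (10*A*b) := mul_le_mul_of_nonneg_left (hsum.trans h5) hs0
            _ = 10*A*s*b := by ring
        have e2 : (b - b0)^2 ≤ 10 * t * b := by
          have hfac : b - b0 = (Real.sqrt b - Real.sqrt b0) * (Real.sqrt b + Real.sqrt b0) := by
            linear_combination hsb0 - hsb
          have hsum : (Real.sqrt b + Real.sqrt b0)^2 ≤ 2*b + 2*b0 := by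
            nlinarith [sq_nonneg (Real.sqrt b - Real.sqrt b0)]
          have h5 : 2*b + 2*b0 ≤ 10*b := by nlinarith
          calc (b - b0)^2 = t * (Real.sqrt b + Real.sqrt b0)^2 := by rw [hfac]; ring
            _ ≤ t * (10*b) := mul_le_mul_of_nonneg_left (hsum.trans h5) ht0
            _ = 10*t*b := by ring
        have split : (a * b0 - a0 * b)^2 ≤
            2 * ((a - a0) * b0)^2 + 2 * (a0 * (b0 - b))^2 := by
          nlinarith [sq_nonneg ((a - a0) * b0 - a0 * (b0 - b))]
        have hb0sq : b0 * b0 ≤ 4 * b * b0 := mul_le_mul_of_nonneg_right hcase hb0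
        have t1 : 2 * ((a - a0) * b0)^2 ≤ 80 * A * s * (b^2 * b0) := by
          calc 2 * ((a - a0) * b0)^2 = 2 * (a - a0)^2 * (b0 * b0) := by ring
            _ ≤ 2 * (10*A*s*b) * (b0 * b0) := by
                apply mul_le_mul_of_nonneg_right _ (mul_nonneg hb0 hb0)
                linarith
            _ = (20*A*s*b) * (b0 * b0) := by ring
            _ ≤ (20*A*s*b) * (4 * b * b0) := by
                apply mul_le_mul_of_nonneg_left hb0sq
                positivity
            _ = 80 * A * s * (b^2 * b0) := by ring
        have t2 : 2 * (a0 * (b0 - b))^2 ≤ 80 * A^2 * t * (b^2 * b0) := by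
          have ha0sq : a0^2 ≤ A^2 * b0^2 := by nlinarith
          calc 2 * (a0 * (b0 - b))^2 = 2 * a0^2 * (b - b0)^2 := by ring
            _ ≤ 2 * (A^2 * b0^2) * (b - b0)^2 := by
                apply mul_le_mul_of_nonneg_right _ (sq_nonneg _)
                linarith
            _ ≤ 2 * (A^2 * b0^2) * (10*t*b) := by
                apply mul_le_mul_of_nonneg_left e2
                positivity
            _ = (20*A^2*t*b) * (b0 * b0) := by ring
            _ ≤ (20*A^2*t*b) * (4 * b * b0) := by
                apply mul_le_mul_of_nonneg_left hb0sq
                positivity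
            _ = 80 * A^2 * t * (b^2 * b0) := by ring
        have final : 80 * A * s * (b^2 * b0) + 80 * A^2 * t * (b^2 * b0) ≤
            80 * A * (1 + A) * (s + t) * (b^2 * b0) := by
          nlinarith [mul_nonneg (mul_nonneg (mul_nonneg (by positivity : (0:ℝ) ≤ 80*A) hA.le) hs0) hbb0,
            mul_nonneg (mul_nonneg (by positivity : (0:ℝ) ≤ 80*A) ht0) hbb0]
        linarith
      · -- b0 > 4b
        have hbig : b0 ≤ 4 * t := by
          have h2 : Real.sqrt b ≤ Real.sqrt b0 / 2 := by
            nlinarith [sq_nonneg (2 * Real.sqrt b - Real.sqrt b0)]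
          nlinarith
        have crude : (a * b0 - a0 * b)^2 ≤ A^2 * (b0 * b0) * b^2 := by
          have h1 : a * b0 ≤ A * b * b0 := by nlinarith
          have h2 : a0 * b ≤ A * b0 * b := by nlinarith
          have h3 : 0 ≤ a * b0 := mul_nonneg ha hb0
          have h4 : 0 ≤ a0 * b := mul_nonneg ha0 hb
          nlinarith
        have step : A^2 * (b0 * b0) * b^2 ≤ A^2 * (4 * t * b0) * b^2 := by
          have : b0 * b0 ≤ (4 * t) * b0 := mul_le_mul_of_nonneg_right hbig hb0
          nlinarith [sq_nonneg b, sq_nonneg A]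
        have last : A^2 * (4 * t * b0) * b^2 ≤ 80 * A * (1 + A) * (s + t) * (b^2 * b0) := by
          nlinarith [mul_nonneg (mul_nonneg (mul_nonneg (by positivity : (0:ℝ) ≤ 80*A) hA.le) hs0) hbb0,
            mul_nonneg (mul_nonneg hA.le ht0) hbb0,
            mul_nonneg (mul_nonneg (mul_nonneg hA.le hA.le) ht0) hbb0]
        linarith
    have hd : b0 * (a / b - a0 / b0) ^ 2 * (b^2 * b0) = (a * b0 - a0 * b)^2 := by
      field_simp
    have hpos : (0:ℝ) < b^2 * b0 := by positivity
    rw [← mul_le_mul_iff_of_pos_right hpos, hd]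
    exact key

/-- helper: Hellinger summand -/
def hterm {A : ℝ} (G G₀ : Prior A) (x : ℕ) : ℝ :=
  (Real.sqrt (mix G x) - Real.sqrt (mix G₀ x)) ^ 2

lemma hterm_nonneg {A : ℝ} (G G₀ : Prior A) (x : ℕ) : 0 ≤ hterm G G₀ x := sq_nonneg _

lemma regret_pointwise {A : ℝ} (hA : 0 < A) (G₀ G : Prior A) (x : ℕ) :
    mix G₀ x * (bayes G x - bayes G₀ x) ^ 2 ≤
      80 * A * (1 + A) * ((x : ℝ) + 1) * (hterm G G₀ x + hterm G G₀ (x + 1)) := by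
  have hx1 : (0:ℝ) ≤ (x:ℝ) + 1 := by positivity
  have key := key_alg (A := A) (a := ((x:ℝ)+1) * mix G (x+1)) (b := mix G x)
    (a0 := ((x:ℝ)+1) * mix G₀ (x+1)) (b0 := mix G₀ x) hA
    (mul_nonneg hx1 (mix_nonneg G (x+1))) (mix_nonneg G x)
    (mul_nonneg hx1 (mix_nonneg G₀ (x+1))) (mix_nonneg G₀ x)
    (succ_le hA G x) (succ_le hA G₀ x)
  have hsq : ∀ H : Prior A, Real.sqrt (((x:ℝ)+1) * mix H (x+1))
      = Real.sqrt ((x:ℝ)+1) * Real.sqrt (mix H (x+1)) := fun H => Real.sqrt_mul hx1 _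
  have hdiff : (Real.sqrt (((x:ℝ)+1) * mix G (x+1)) - Real.sqrt (((x:ℝ)+1) * mix G₀ (x+1)))^2
      = ((x:ℝ)+1) * hterm G G₀ (x+1) := by
    rw [hsq G, hsq G₀, hterm]
    have : Real.sqrt ((x:ℝ)+1) ^ 2 = (x:ℝ)+1 := Real.sq_sqrt hx1
    nlinarith [Real.sqrt_nonneg ((x:ℝ)+1)]
  rw [hdiff] at key
  unfold bayes
  have hle : mix G₀ x * (((x:ℝ)+1) * mix G (x+1) / mix G x - ((x:ℝ)+1) * mix G₀ (x+1) / mix G₀ x)^2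
      ≤ 80 * A * (1 + A) * (((x:ℝ)+1) * hterm G G₀ (x+1) + hterm G G₀ x) := key
  have hmono : 80 * A * (1 + A) * (((x:ℝ)+1) * hterm G G₀ (x+1) + hterm G G₀ x) ≤
      80 * A * (1 + A) * ((x : ℝ) + 1) * (hterm G G₀ x + hterm G G₀ (x + 1)) := by
    have h1 : hterm G G₀ x ≤ ((x:ℝ)+1) * hterm G G₀ x := by
      nlinarith [hterm_nonneg G G₀ x, Nat.cast_nonneg (α := ℝ) x]
    nlinarith [hterm_nonneg G G₀ (x+1), hterm_nonneg G G₀ x,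
      mul_pos (mul_pos (by positivity : (0:ℝ) < 80*A) (by positivity : (0:ℝ) < 1+A)) (by positivity : (0:ℝ) < (x:ℝ)+1)]
  calc mix G₀ x * (bayes G x - bayes G₀ x)^2 = mix G₀ x *
        (((x:ℝ)+1) * mix G (x+1) / mix G x - ((x:ℝ)+1) * mix G₀ (x+1) / mix G₀ x)^2 := rfl
    _ ≤ _ := hle.trans hmono

lemma mix_summable {A : ℝ} (hA : 0 < A) (G : Prior A) : Summable (mix G) :=
  Summable.of_nonneg_of_le (mix_nonneg G) (mix_le hA G) (Real.summable_pow_div_factorial A)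

lemma hterm_le {A : ℝ} (hA : 0 < A) (G G₀ : Prior A) (x : ℕ) :
    hterm G G₀ x ≤ 2 * (A ^ x / (Nat.factorial x : ℝ)) := by
  have h1 := mix_le hA G x
  have h2 := mix_le hA G₀ x
  have h3 := mix_nonneg G x
  have h4 := mix_nonneg G₀ x
  have s1 : Real.sqrt (mix G x) ^ 2 = mix G x := Real.sq_sqrt h3
  have s2 : Real.sqrt (mix G₀ x) ^ 2 = mix G₀ x := Real.sq_sqrt h4
  unfold hterm
  nlinarith [mul_nonneg (Real.sqrt_nonneg (mix G x)) (Real.sqrt_nonneg (mix G₀ x))]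

lemma hterm_summable {A : ℝ} (hA : 0 < A) (G G₀ : Prior A) : Summable (hterm G G₀) :=
  Summable.of_nonneg_of_le (hterm_nonneg G G₀) (hterm_le hA G G₀)
    ((Real.summable_pow_div_factorial A).mul_left 2)

lemma mix_tail {A : ℝ} (hA : 0 < A) (G₀ : Prior A) (M : ℕ) :
    (∑' i : ℕ, mix G₀ (i + M)) ≤ Real.exp A * (A ^ M / (Nat.factorial M : ℝ)) := by
  have hpt : ∀ i : ℕ, mix G₀ (i + M) ≤
      (A ^ i / (Nat.factorial i : ℝ)) * (A ^ M / (Nat.factorial M : ℝ)) := by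
    intro i
    have h1 := mix_le hA G₀ (i + M)
    have hfac : ((Nat.factorial i : ℝ) * (Nat.factorial M : ℝ)) ≤ ((Nat.factorial (i+M) : ℝ)) := by
      have := Nat.le_of_dvd (Nat.factorial_pos (i+M))
        (Nat.factorial_mul_factorial_dvd_factorial_add i M)
      exact_mod_cast this
    have h2 : A ^ (i+M) / (Nat.factorial (i+M) : ℝ) ≤
        A ^ (i+M) / ((Nat.factorial i : ℝ) * (Nat.factorial M : ℝ)) := by
      exact div_le_div_of_nonneg_left (by positivity) (by positivity) hfac
    have h3 : A ^ (i+M) / ((Nat.factorial i : ℝ) * (Nat.factorial M : ℝ)) =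
        (A ^ i / (Nat.factorial i : ℝ)) * (A ^ M / (Nat.factorial M : ℝ)) := by
      rw [pow_add]
      field_simp
    linarith
  have hs2 : Summable (fun i : ℕ =>
      (A ^ i / (Nat.factorial i : ℝ)) * (A ^ M / (Nat.factorial M : ℝ))) :=
    (Real.summable_pow_div_factorial A).mul_right _
  have hs1 : Summable (fun i : ℕ => mix G₀ (i + M)) :=
    (summable_nat_add_iff M).mpr (mix_summable hA G₀)
  calc (∑' i : ℕ, mix G₀ (i + M)) ≤
      ∑' i : ℕ, (A ^ i / (Nat.factorial i : ℝ)) * (A ^ M / (Nat.factorial M : ℝ)) :=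
        Summable.tsum_le_tsum hpt hs1 hs2
    _ = (∑' i : ℕ, A ^ i / (Nat.factorial i : ℝ)) * (A ^ M / (Nat.factorial M : ℝ)) :=
        tsum_mul_right
    _ ≤ Real.exp A * (A ^ M / (Nat.factorial M : ℝ)) := by
        apply mul_le_mul_of_nonneg_right _ (by positivity)
        exact Real.tsum_le_of_sum_range_le (fun n => by positivity)
          (fun n => Real.sum_le_exp_of_nonneg hA.le n)

lemma pow_fac_le {A : ℝ} (hA : 0 < A) (M : ℕ) (hM : 1 ≤ M) :
    A ^ M / (Nat.factorial M : ℝ) ≤ (Real.exp 1 * A / (M : ℝ)) ^ M := by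
  have hMpos : (0:ℝ) < (M:ℝ) := by exact_mod_cast hM
  have hfac : (0:ℝ) < (Nat.factorial M : ℝ) := by positivity
  have hstir : ((M:ℝ)) ^ M ≤ (Nat.factorial M : ℝ) * Real.exp M := by
    have := Real.pow_div_factorial_le_exp (x := (M:ℝ)) hMpos.le M
    rw [div_le_iff₀ hfac] at this
    linarith
  have hrhs : (Real.exp 1 * A / (M : ℝ)) ^ M = Real.exp M * A ^ M / ((M:ℝ)) ^ M := by
    rw [div_pow, mul_pow, ← Real.exp_nat_mul]
    ring_nf
  rw [hrhs, div_le_div_iff₀ hfac (by positivity)]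
  calc A ^ M * (M:ℝ) ^ M ≤ A ^ M * ((Nat.factorial M : ℝ) * Real.exp M) := by
        apply mul_le_mul_of_nonneg_left hstir (by positivity)
    _ = Real.exp M * A ^ M * (Nat.factorial M : ℝ) := by ring

/-- Squared Hellinger distance between pmfs on `ℕ`. -/
def hellSq (p q : ℕ → ℝ) : ℝ := ∑' x, (Real.sqrt (p x) - Real.sqrt (q x)) ^ 2

/-- the Hellinger-to-regret functional inequality for Poisson mixtures. -/
theorem stmt_7 (A : ℝ) (hA : 0 < A) :
    ∃ C : ℝ, 0 < C ∧ ∀ G₀ G : Prior A, ∀ ε : ℝ, 0 < ε → ε < Real.exp (-Real.exp 1) →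
      (∑' x : ℕ, mix G₀ x * (bayes G x - bayes G₀ x) ^ 2) ≤
        C * (Real.log (1 / ε) / Real.log (Real.log (1 / ε)) * hellSq (mix G) (mix G₀) + ε) := by
  set K : ℝ := 3 * Real.exp 1 * A + 3 with hK_def
  have hK3 : 3 ≤ K := by nlinarith [Real.exp_pos 1]
  have hK0 : 0 < K := by linarith
  refine ⟨160 * A * (1 + A) * (K + 1) + A ^ 2 * Real.exp A + 1, by positivity, ?_⟩
  intro G₀ G ε hε hεe
  set L : ℝ := Real.log (1 / ε) with hL_def
  have hLeq : L = -Real.log ε := by rw [hL_def, one_div, Real.log_inv]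
  have hL : Real.exp 1 < L := by
    have h1 : Real.log ε < -Real.exp 1 := by
      have := Real.log_lt_log hε hεe
      rwa [Real.log_exp] at this
    rw [hLeq]; linarith
  have hL0 : 0 < L := lt_trans (Real.exp_pos 1) hL
  have hlogL : 1 < Real.log L := by
    have := Real.log_lt_log (Real.exp_pos 1) hL
    rwa [Real.log_exp] at this
  have hlogL0 : 0 < Real.log L := by linarith
  set M : ℕ := ⌈K * L / Real.log L⌉₊ with hM_def
  have harg_pos : 0 < K * L / Real.log L := by positivity
  have hMge : K * L / Real.log L ≤ (M : ℝ) := Nat.le_ceil _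
  have hM1 : 1 ≤ M := Nat.one_le_iff_ne_zero.mpr (Nat.pos_iff_ne_zero.mp (Nat.ceil_pos.mpr harg_pos))
  have hMpos : (0:ℝ) < (M:ℝ) := by exact_mod_cast hM1
  have hMlt : (M : ℝ) < K * L / Real.log L + 1 := Nat.ceil_lt_add_one harg_pos.le
  have hLlog : Real.log L ≤ L := (Real.log_le_sub_one_of_pos hL0).trans (by linarith)
  have hquot1 : 1 ≤ L / Real.log L := (one_le_div hlogL0).mpr hLlog
  have hMle : (M : ℝ) ≤ (K + 1) * (L / Real.log L) := by
    have he : K * L / Real.log L = K * (L / Real.log L) := by ring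
    nlinarith
  -- exponent estimate
  have hsqL0 : 0 < Real.sqrt L := Real.sqrt_pos.mpr hL0
  have hsqL : Real.sqrt L ^ 2 = L := Real.sq_sqrt hL0.le
  have hlogsq : Real.log L ≤ 2 * Real.sqrt L := by
    have h1 : Real.log (Real.sqrt L) = Real.log L / 2 := Real.log_sqrt hL0.le
    have h2 : Real.log (Real.sqrt L) ≤ Real.sqrt L - 1 := Real.log_le_sub_one_of_pos hsqL0
    linarith
  have hmassive : Real.exp 1 * A * Real.sqrt L ≤ (M : ℝ) := by
    have h1 : Real.sqrt L * Real.log L ≤ 3 * L := by nlinarith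
    have h2 : (Real.exp 1 * A * Real.sqrt L) * Real.log L ≤ K * L := by
      have h3 : Real.exp 1 * A * (Real.sqrt L * Real.log L) ≤ Real.exp 1 * A * (3 * L) := by
        apply mul_le_mul_of_nonneg_left h1 (by positivity)
      nlinarith [Real.exp_pos 1, hL0]
    have := (le_div_iff₀ hlogL0).mpr h2
    linarith
  have heA : (0:ℝ) < Real.exp 1 * A := by positivity
  have hratio : Real.sqrt L ≤ (M : ℝ) / (Real.exp 1 * A) := by
    rw [le_div_iff₀ heA]
    nlinarith
  have hlog2 : Real.log L / 2 ≤ Real.log ((M : ℝ) / (Real.exp 1 * A)) := by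
    have := Real.log_le_log hsqL0 hratio
    rwa [Real.log_sqrt hL0.le] at this
  have hexp : L ≤ (M : ℝ) * Real.log ((M : ℝ) / (Real.exp 1 * A)) := by
    have h1 : (K * L / Real.log L) * (Real.log L / 2) ≤
        (M : ℝ) * Real.log ((M : ℝ) / (Real.exp 1 * A)) := by
      apply mul_le_mul hMge hlog2 (by positivity) hMpos.le
    have h2 : (K * L / Real.log L) * (Real.log L / 2) = K * L / 2 := by
      field_simp
    nlinarith
  have htail_eps : (Real.exp 1 * A / (M : ℝ)) ^ M ≤ ε := by
    have hq : (0:ℝ) < Real.exp 1 * A / (M : ℝ) := by positivity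
    have hpow : (Real.exp 1 * A / (M : ℝ)) ^ M =
        Real.exp ((M : ℝ) * Real.log (Real.exp 1 * A / (M : ℝ))) := by
      rw [Real.exp_nat_mul, Real.exp_log hq]
    have hloginv : Real.log (Real.exp 1 * A / (M : ℝ)) =
        -Real.log ((M : ℝ) / (Real.exp 1 * A)) := by
      rw [← Real.log_inv, inv_div]
    rw [hpow, hloginv]
    have h1 : (M : ℝ) * -Real.log ((M : ℝ) / (Real.exp 1 * A)) ≤ -L := by nlinarith
    calc Real.exp ((M : ℝ) * -Real.log ((M : ℝ) / (Real.exp 1 * A))) ≤ Real.exp (-L) :=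
        Real.exp_le_exp.mpr h1
      _ = ε := by rw [hLeq, neg_neg, Real.exp_log hε]
  -- main sum estimates
  set φ : ℕ → ℝ := fun x => mix G₀ x * (bayes G x - bayes G₀ x) ^ 2 with hφ_def
  have hφ0 : ∀ x, 0 ≤ φ x := fun x => mul_nonneg (mix_nonneg G₀ x) (sq_nonneg _)
  have hφle : ∀ x, φ x ≤ A ^ 2 * mix G₀ x := by
    intro x
    have hb1 := bayes_nonneg G x
    have hb2 := bayes_le hA G x
    have hb3 := bayes_nonneg G₀ x
    have hb4 := bayes_le hA G₀ x
    have hd : (bayes G x - bayes G₀ x) ^ 2 ≤ A ^ 2 := by nlinarith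
    calc φ x = mix G₀ x * (bayes G x - bayes G₀ x) ^ 2 := rfl
      _ ≤ mix G₀ x * A ^ 2 := mul_le_mul_of_nonneg_left hd (mix_nonneg G₀ x)
      _ = A ^ 2 * mix G₀ x := by ring
  have hφs : Summable φ :=
    Summable.of_nonneg_of_le hφ0 hφle ((mix_summable hA G₀).mul_left _)
  have hhs : Summable (hterm G G₀) := hterm_summable hA G G₀
  set H : ℝ := hellSq (mix G) (mix G₀) with hH_def
  have hHt : H = ∑' x, hterm G G₀ x := rfl
  have hH0 : 0 ≤ H := by
    rw [hHt]; exact tsum_nonneg (hterm_nonneg G G₀)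
  -- head bound
  have hhead : ∑ x ∈ Finset.range M, φ x ≤ 160 * A * (1 + A) * (M : ℝ) * H := by
    have step1 : ∑ x ∈ Finset.range M, φ x ≤
        ∑ x ∈ Finset.range M, 80 * A * (1 + A) * (M : ℝ) * (hterm G G₀ x + hterm G G₀ (x+1)) := by
      apply Finset.sum_le_sum
      intro x hx
      have hxM : (x : ℝ) + 1 ≤ (M : ℝ) := by
        have : x + 1 ≤ M := Finset.mem_range.mp hx
        exact_mod_cast this
      calc φ x ≤ 80 * A * (1 + A) * ((x : ℝ) + 1) * (hterm G G₀ x + hterm G G₀ (x + 1)) :=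
          regret_pointwise hA G₀ G x
        _ ≤ 80 * A * (1 + A) * (M : ℝ) * (hterm G G₀ x + hterm G G₀ (x + 1)) := by
          apply mul_le_mul_of_nonneg_right _
            (add_nonneg (hterm_nonneg G G₀ x) (hterm_nonneg G G₀ (x+1)))
          apply mul_le_mul_of_nonneg_left hxM (by positivity)
    have hsum1 : ∑ x ∈ Finset.range M, hterm G G₀ x ≤ H := by
      rw [hHt]
      exact Summable.sum_le_tsum _ (fun x _ => hterm_nonneg G G₀ x) hhs
    have hsum2 : ∑ x ∈ Finset.range M, hterm G G₀ (x + 1) ≤ H := by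
      have hrec : ∑ x ∈ Finset.range (M + 1), hterm G G₀ x =
          (∑ x ∈ Finset.range M, hterm G G₀ (x + 1)) + hterm G G₀ 0 :=
        Finset.sum_range_succ' _ M
      have hle : ∑ x ∈ Finset.range (M + 1), hterm G G₀ x ≤ H := by
        rw [hHt]
        exact Summable.sum_le_tsum _ (fun x _ => hterm_nonneg G G₀ x) hhs
      have := hterm_nonneg G G₀ 0
      linarith
    have step2 : ∑ x ∈ Finset.range M, 80 * A * (1 + A) * (M : ℝ) *
        (hterm G G₀ x + hterm G G₀ (x+1)) = 80 * A * (1 + A) * (M : ℝ) *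
        ((∑ x ∈ Finset.range M, hterm G G₀ x) + ∑ x ∈ Finset.range M, hterm G G₀ (x+1)) := by
      rw [← Finset.mul_sum, Finset.sum_add_distrib]
    have hA1 : ∑ x ∈ Finset.range M, φ x ≤ 80 * A * (1 + A) * (M : ℝ) *
        ((∑ x ∈ Finset.range M, hterm G G₀ x) + ∑ x ∈ Finset.range M, hterm G G₀ (x+1)) :=
      step1.trans (le_of_eq step2)
    have hA2 : 80 * A * (1 + A) * (M : ℝ) *
        ((∑ x ∈ Finset.range M, hterm G G₀ x) + ∑ x ∈ Finset.range M, hterm G G₀ (x+1)) ≤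
        80 * A * (1 + A) * (M : ℝ) * (H + H) :=
      mul_le_mul_of_nonneg_left (by linarith) (by positivity)
    have hA3 : 80 * A * (1 + A) * (M : ℝ) * (H + H) = 160 * A * (1 + A) * (M : ℝ) * H := by
      ring
    linarith
  -- tail bound
  have htail : (∑' i : ℕ, φ (i + M)) ≤ A ^ 2 * Real.exp A * ε := by
    have h1 : (∑' i : ℕ, φ (i + M)) ≤ ∑' i : ℕ, A ^ 2 * mix G₀ (i + M) := by
      apply Summable.tsum_le_tsum (fun i => hφle (i + M))
      · exact (summable_nat_add_iff M).mpr hφs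
      · exact ((summable_nat_add_iff M).mpr (mix_summable hA G₀)).mul_left _
    have h2 : ∑' i : ℕ, A ^ 2 * mix G₀ (i + M) = A ^ 2 * ∑' i : ℕ, mix G₀ (i + M) :=
      tsum_mul_left
    have h3 : A ^ 2 * (∑' i : ℕ, mix G₀ (i + M)) ≤
        A ^ 2 * (Real.exp A * (A ^ M / (Nat.factorial M : ℝ))) :=
      mul_le_mul_of_nonneg_left (mix_tail hA G₀ M) (by positivity)
    have h4 : A ^ M / (Nat.factorial M : ℝ) ≤ ε :=
      (pow_fac_le hA M hM1).trans htail_eps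
    have h5 : A ^ 2 * (Real.exp A * (A ^ M / (Nat.factorial M : ℝ))) ≤
        A ^ 2 * Real.exp A * ε := by
      have := mul_le_mul_of_nonneg_left h4 (by positivity : (0:ℝ) ≤ A ^ 2 * Real.exp A)
      nlinarith [Real.exp_pos A]
    rw [h2] at h1
    linarith
  -- combine
  have hsplit : (∑ x ∈ Finset.range M, φ x) + (∑' i : ℕ, φ (i + M)) = ∑' x : ℕ, φ x :=
    Summable.sum_add_tsum_nat_add M hφs
  have hheadM : 160 * A * (1 + A) * (M : ℝ) * H ≤
      160 * A * (1 + A) * (K + 1) * (L / Real.log L * H) := by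
    have h1 : 160 * A * (1 + A) * (M : ℝ) * H ≤
        160 * A * (1 + A) * ((K + 1) * (L / Real.log L)) * H := by
      apply mul_le_mul_of_nonneg_right _ hH0
      apply mul_le_mul_of_nonneg_left hMle (by positivity)
    nlinarith
  have hfinal : (∑' x : ℕ, φ x) ≤
      160 * A * (1 + A) * (K + 1) * (L / Real.log L * H) + A ^ 2 * Real.exp A * ε := by
    rw [← hsplit]
    have := hhead.trans hheadM
    linarith
  have hX0 : 0 ≤ L / Real.log L * H := mul_nonneg (by positivity) hH0
  calc (∑' x : ℕ, φ x) ≤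
      160 * A * (1 + A) * (K + 1) * (L / Real.log L * H) + A ^ 2 * Real.exp A * ε := hfinal
    _ ≤ (160 * A * (1 + A) * (K + 1) + A ^ 2 * Real.exp A + 1) *
        (L / Real.log L * H + ε) := by
      nlinarith [Real.exp_pos A, mul_nonneg (by positivity : (0:ℝ) ≤ A ^ 2 * Real.exp A) hX0,
        mul_pos (by positivity : (0:ℝ) < 160 * A * (1 + A) * (K + 1) + 1) hε, hX0, hε.le]


end
end

section
/- Let L ≥ 1 be an integer, let w = (w_1,…,w_L) and w' = (w'_1,…,w'_L) be probability vectors with w'_j > 0 for all j, and let λ_1,…,λ_L ≥ 0 and λ'_1,…,λ'_L > 0. Then the Poisson mixtures p = Σ_{j=1}^L w_j Poi(λ_j) and q = Σ_{j=1}^L w'_j Poi(λ'_j) satisfy 1 + χ²(p ‖ q) ≤ (1 + χ²(w ‖ w')) · (1 + max_{1 ≤ j ≤ L} χ²(Poi(λ_j) ‖ Poi(λ'_j))), where χ²(w ‖ w') = Σ_{j=1}^L w_j²/w'_j − 1. -/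
open MeasureTheory Real
open scoped ENNReal BigOperators

noncomputable section

/-- χ²-divergence between pmfs on `ℕ`, valued in `[0, ∞]`. -/
def chiSqD (p q : ℕ → ℝ) : ℝ≥0∞ :=
  (∑' x, if q x = 0 then (if p x = 0 then 0 else ∞) else ENNReal.ofReal (p x ^ 2 / q x)) - 1

lemma poiPMF_pos {θ : ℝ} (hθ : 0 < θ) (x : ℕ) : 0 < poiPMF θ x :=
  div_pos (mul_pos (Real.exp_pos _) (pow_pos hθ x)) (by exact_mod_cast x.factorial_pos)

lemma poiPMF_nonneg {θ : ℝ} (hθ : 0 ≤ θ) (x : ℕ) : 0 ≤ poiPMF θ x :=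
  div_nonneg (mul_nonneg (Real.exp_pos _).le (pow_nonneg hθ x)) (Nat.cast_nonneg _)

/-- tensorization-type bound of the χ²-divergence between finite Poisson
mixtures in terms of the χ²-divergence of the weights and of the atoms. -/
theorem stmt_19 (L : ℕ) (hL : 1 ≤ L) (w w' : Fin L → ℝ)
    (hw : ∀ j, 0 ≤ w j) (hw1 : ∑ j, w j = 1)
    (hw' : ∀ j, 0 < w' j) (hw'1 : ∑ j, w' j = 1)
    (lam lam' : Fin L → ℝ) (hlam : ∀ j, 0 ≤ lam j) (hlam' : ∀ j, 0 < lam' j) :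
    1 + chiSqD (fun x => ∑ j, w j * poiPMF (lam j) x) (fun x => ∑ j, w' j * poiPMF (lam' j) x) ≤
      (1 + ENNReal.ofReal ((∑ j, w j ^ 2 / w' j) - 1)) *
        (1 + ⨆ j, chiSqD (poiPMF (lam j)) (poiPMF (lam' j))) := by
  classical
  have hne : Nonempty (Fin L) := Fin.pos_iff_nonempty.mp hL
  set p : Fin L → ℕ → ℝ := fun j => poiPMF (lam j) with hp
  set q : Fin L → ℕ → ℝ := fun j => poiPMF (lam' j) with hq
  have hqpos : ∀ j x, 0 < q j x := fun j x => poiPMF_pos (hlam' j) x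
  have hpnn : ∀ j x, 0 ≤ p j x := fun j x => poiPMF_nonneg (hlam j) x
  set P : ℕ → ℝ := fun x => ∑ j, w j * p j x with hP
  set Q : ℕ → ℝ := fun x => ∑ j, w' j * q j x with hQ
  have hQpos : ∀ x, 0 < Q x :=
    fun x => Finset.sum_pos (fun j _ => mul_pos (hw' j) (hqpos j x)) Finset.univ_nonempty
  set S : ℝ := ∑ j, w j ^ 2 / w' j with hS
  have hS1 : 1 ≤ S := by
    have := Finset.sq_sum_div_le_sum_sq_div Finset.univ w (fun j _ => hw' j)
    rwa [hw1, hw'1, one_pow, div_one] at this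
  -- pointwise Cauchy–Schwarz
  have key : ∀ x, P x ^ 2 / Q x ≤ ∑ j, (w j ^ 2 / w' j) * (p j x ^ 2 / q j x) := by
    intro x
    have h := Finset.sq_sum_div_le_sum_sq_div Finset.univ (fun j => w j * p j x)
      (g := fun j => w' j * q j x) (fun j _ => mul_pos (hw' j) (hqpos j x))
    refine h.trans_eq (Finset.sum_congr rfl fun j _ => ?_)
    rw [mul_pow]
    field_simp
  -- abbreviations for the ENNReal quantities
  set B : Fin L → ℝ≥0∞ := fun j => ∑' x, ENNReal.ofReal (p j x ^ 2 / q j x) with hB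
  set A : ℝ≥0∞ := ∑' x, ENNReal.ofReal (P x ^ 2 / Q x) with hA
  set T : ℝ≥0∞ := 1 + ⨆ j, chiSqD (poiPMF (lam j)) (poiPMF (lam' j)) with hT
  have hchiP : chiSqD P Q = A - 1 := by
    unfold chiSqD
    congr 1
    exact tsum_congr fun x => by rw [if_neg (hQpos x).ne']
  have hchiB : ∀ j, chiSqD (poiPMF (lam j)) (poiPMF (lam' j)) = B j - 1 := by
    intro j
    unfold chiSqD
    congr 1
    exact tsum_congr fun x => by rw [if_neg (hqpos j x).ne']
  have hBT : ∀ j, B j ≤ T := by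
    intro j
    calc B j ≤ 1 + (B j - 1) := le_add_tsub
    _ ≤ T := by
        rw [hT]
        exact add_le_add_right ((hchiB j).symm.le.trans (le_iSup (fun j => chiSqD (poiPMF (lam j)) (poiPMF (lam' j))) j)) 1
  -- main estimate : A ≤ ofReal S * T
  have hmain : A ≤ ENNReal.ofReal S * T := by
    have h1 : A ≤ ∑' x, ∑ j, ENNReal.ofReal ((w j ^ 2 / w' j) * (p j x ^ 2 / q j x)) := by
      refine ENNReal.tsum_le_tsum fun x => ?_
      rw [← ENNReal.ofReal_sum_of_nonneg fun j _ =>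
        mul_nonneg (div_nonneg (sq_nonneg _) (hw' j).le)
          (div_nonneg (sq_nonneg _) (hqpos j _).le)]
      exact ENNReal.ofReal_le_ofReal (key x)
    have h2 : (∑' x, ∑ j, ENNReal.ofReal ((w j ^ 2 / w' j) * (p j x ^ 2 / q j x)))
        = ∑ j, ENNReal.ofReal (w j ^ 2 / w' j) * B j := by
      rw [Summable.tsum_finsetSum fun j _ => ENNReal.summable]
      refine Finset.sum_congr rfl fun j _ => ?_
      rw [hB, ← ENNReal.tsum_mul_left]
      exact tsum_congr fun x =>
        ENNReal.ofReal_mul (div_nonneg (sq_nonneg _) (hw' j).le)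
    calc A ≤ ∑ j, ENNReal.ofReal (w j ^ 2 / w' j) * B j := h1.trans_eq h2
    _ ≤ ∑ j, ENNReal.ofReal (w j ^ 2 / w' j) * T :=
        Finset.sum_le_sum fun j _ => mul_le_mul_right (hBT j) _
    _ = ENNReal.ofReal S * T := by
        rw [← Finset.sum_mul, hS,
          ENNReal.ofReal_sum_of_nonneg fun j _ => div_nonneg (sq_nonneg _) (hw' j).le]
  have hRHS : (1 + ENNReal.ofReal (S - 1)) * T = ENNReal.ofReal S * T := by
    congr 1
    rw [← ENNReal.ofReal_one, ← ENNReal.ofReal_add zero_le_one (by linarith), add_sub_cancel]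
  have hT1 : (1 : ℝ≥0∞) ≤ ENNReal.ofReal S * T := by
    have : (1 : ℝ≥0∞) ≤ ENNReal.ofReal S := by
      rw [← ENNReal.ofReal_one]; exact ENNReal.ofReal_le_ofReal hS1
    calc (1 : ℝ≥0∞) = 1 * 1 := (one_mul 1).symm
    _ ≤ ENNReal.ofReal S * T := mul_le_mul' this (le_add_right le_rfl)
  rw [hchiP, hRHS]
  rcases le_total A 1 with h | h
  · rw [tsub_eq_zero_of_le h, add_zero]; exact hT1
  · rw [add_tsub_cancel_of_le h]; exact hmain


end
end
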